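/- Subsumption Elimination: if the parameters of superLL(E,de,co,dg,p) satisfy the subsumption axioms (sb1)–(sb6), then every sequent provable in superLL(E,de,co,dg,p) is provable in the system obtained by removing the functorial promotion rule and the unary contraction (subsumption) rule and adding the ordered promotion rule (p_≤); moreover if the original proof is cut-free, so is the resulting proof. -/
import Mathlib


/-- Linear logic formulas with exponential connectives indexed by signatures in `E`. -/
inductive Formula (E : Type) : Type
  | var : ℕ → Formula E
  | covar : ℕ → Formula E
  | tens : Formula E → Formula E → Formula E
  | parr : Formula E → Formula E → Formula E
  | one : Formula E
  | bot : Formula E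
  | awith : Formula E → Formula E → Formula E
  | aplus : Formula E → Formula E → Formula E
  | top : Formula E
  | zero : Formula E
  | oc : E → Formula E → Formula E
  | wn : E → Formula E → Formula E

namespace Formula

/-- Duality on formulas. -/
def dual {E : Type} : Formula E → Formula E
  | var n => covar n
  | covar n => var n
  | tens A B => parr A.dual B.dual
  | parr A B => tens A.dual B.dual
  | one => bot
  | bot => one
  | awith A B => aplus A.dual B.dual
  | aplus A B => awith A.dual B.dual
  | top => zero
  | zero => top
  | oc e A => wn e A.dual
  | wn e A => oc e A.dual

end Formula

/-- The sequent calculus superLL(E, de, co, dg, p).  The `Bool` index records whether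
the cut rule may be used (`true` = cut allowed, `false` = cut-free proofs only). -/
inductive SuperLL {E : Type} (de : E → Prop) (co : List E → E → Prop)
    (dg : E → E → E → Prop) (p : ℕ → E → Prop) : Bool → List (Formula E) → Prop
  | ax (b) (A : Formula E) : SuperLL de co dg p b [A, A.dual]
  | ex {b Γ Δ} : SuperLL de co dg p b Γ → Γ.Perm Δ → SuperLL de co dg p b Δ
  | cut {A : Formula E} {Γ Δ : List (Formula E)} : SuperLL de co dg p true (A :: Γ) →
      SuperLL de co dg p true (A.dual :: Δ) → SuperLL de co dg p true (Γ ++ Δ)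
  | tens {b} {A B : Formula E} {Γ Δ : List (Formula E)} : SuperLL de co dg p b (A :: Γ) → SuperLL de co dg p b (B :: Δ) →
      SuperLL de co dg p b (A.tens B :: (Γ ++ Δ))
  | parr {b} {A B : Formula E} {Γ : List (Formula E)} : SuperLL de co dg p b (A :: B :: Γ) →
      SuperLL de co dg p b (A.parr B :: Γ)
  | one (b) : SuperLL de co dg p b [Formula.one]
  | bot {b Γ} : SuperLL de co dg p b Γ → SuperLL de co dg p b (Formula.bot :: Γ)
  | awith {b} {A B : Formula E} {Γ : List (Formula E)} : SuperLL de co dg p b (A :: Γ) → SuperLL de co dg p b (B :: Γ) →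
      SuperLL de co dg p b (A.awith B :: Γ)
  | aplus1 {b} {A B : Formula E} {Γ : List (Formula E)} : SuperLL de co dg p b (A :: Γ) →
      SuperLL de co dg p b (A.aplus B :: Γ)
  | aplus2 {b} {A B : Formula E} {Γ : List (Formula E)} : SuperLL de co dg p b (B :: Γ) →
      SuperLL de co dg p b (A.aplus B :: Γ)
  | top (b) (Γ) : SuperLL de co dg p b (Formula.top :: Γ)
  | der {b e A Γ} : de e → SuperLL de co dg p b (A :: Γ) →
      SuperLL de co dg p b (Formula.wn e A :: Γ)
  | con {b} {l : List E} {e A Γ} : co l e →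
      SuperLL de co dg p b (l.map (fun ei => Formula.wn ei A) ++ Γ) →
      SuperLL de co dg p b (Formula.wn e A :: Γ)
  | dig {b e1 e2 e A Γ} : dg e1 e2 e →
      SuperLL de co dg p b (Formula.wn e1 (Formula.wn e2 A) :: Γ) →
      SuperLL de co dg p b (Formula.wn e A :: Γ)
  | prom {b e A} {Δ : List (Formula E)} : p Δ.length e → SuperLL de co dg p b (A :: Δ) →
      SuperLL de co dg p b (Formula.oc e A :: Δ.map (Formula.wn e))

/-- superLL with the ordered promotion rule instead of functorial promotion, and with
the unary contraction (subsumption) rule removed (contraction is restricted to arities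
`≠ 1`). -/
inductive SuperLLO {E : Type} (de : E → Prop) (co : List E → E → Prop)
    (dg : E → E → E → Prop) (p : ℕ → E → Prop) : Bool → List (Formula E) → Prop
  | ax (b) (A : Formula E) : SuperLLO de co dg p b [A, A.dual]
  | ex {b Γ Δ} : SuperLLO de co dg p b Γ → Γ.Perm Δ → SuperLLO de co dg p b Δ
  | cut {A : Formula E} {Γ Δ : List (Formula E)} : SuperLLO de co dg p true (A :: Γ) →
      SuperLLO de co dg p true (A.dual :: Δ) → SuperLLO de co dg p true (Γ ++ Δ)
  | tens {b} {A B : Formula E} {Γ Δ : List (Formula E)} : SuperLLO de co dg p b (A :: Γ) →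
      SuperLLO de co dg p b (B :: Δ) → SuperLLO de co dg p b (A.tens B :: (Γ ++ Δ))
  | parr {b} {A B : Formula E} {Γ : List (Formula E)} : SuperLLO de co dg p b (A :: B :: Γ) →
      SuperLLO de co dg p b (A.parr B :: Γ)
  | one (b) : SuperLLO de co dg p b [Formula.one]
  | bot {b Γ} : SuperLLO de co dg p b Γ → SuperLLO de co dg p b (Formula.bot :: Γ)
  | awith {b} {A B : Formula E} {Γ : List (Formula E)} : SuperLLO de co dg p b (A :: Γ) →
      SuperLLO de co dg p b (B :: Γ) → SuperLLO de co dg p b (A.awith B :: Γ)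
  | aplus1 {b} {A B : Formula E} {Γ : List (Formula E)} : SuperLLO de co dg p b (A :: Γ) →
      SuperLLO de co dg p b (A.aplus B :: Γ)
  | aplus2 {b} {A B : Formula E} {Γ : List (Formula E)} : SuperLLO de co dg p b (B :: Γ) →
      SuperLLO de co dg p b (A.aplus B :: Γ)
  | top (b) (Γ) : SuperLLO de co dg p b (Formula.top :: Γ)
  | der {b e A Γ} : de e → SuperLLO de co dg p b (A :: Γ) →
      SuperLLO de co dg p b (Formula.wn e A :: Γ)
  | con {b} {l : List E} {e A Γ} : co l e → l.length ≠ 1 →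
      SuperLLO de co dg p b (l.map (fun ei => Formula.wn ei A) ++ Γ) →
      SuperLLO de co dg p b (Formula.wn e A :: Γ)
  | dig {b e1 e2 e A Γ} : dg e1 e2 e →
      SuperLLO de co dg p b (Formula.wn e1 (Formula.wn e2 A) :: Γ) →
      SuperLLO de co dg p b (Formula.wn e A :: Γ)
  | promle {b} {e : E} {A : Formula E} {es : List E} {As : List (Formula E)} :
      (∀ ei ∈ es, co [e] ei) → es.length = As.length → p As.length e →
      SuperLLO de co dg p b (A :: As) →
      SuperLLO de co dg p b (Formula.oc e A :: List.zipWith Formula.wn es As)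

/-! ### Auxiliary material for subsumption elimination -/

theorem Formula.dual_dual {E : Type} : ∀ A : Formula E, A.dual.dual = A := by
  intro A
  induction A <;> simp [Formula.dual, *]

/-- Subsumption relation on formulas: either equal, or a `?` whose signature is raised. -/
inductive FSub {E : Type} (co : List E → E → Prop) : Formula E → Formula E → Prop
  | refl (A) : FSub co A A
  | wn {e e' : E} {A : Formula E} : co [e] e' → FSub co (Formula.wn e A) (Formula.wn e' A)

section Aux

variable {E : Type} {de : E → Prop} {co : List E → E → Prop}
  {dg : E → E → E → Prop} {p : ℕ → E → Prop}

theorem sub_refl_list (co : List E → E → Prop) :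
    ∀ Γ : List (Formula E), List.Forall₂ (FSub co) Γ Γ := by
  intro Γ; induction Γ with
  | nil => exact .nil
  | cons A Γ ih => exact .cons (.refl A) ih

theorem sub_wn_inv (hsb2 : ∀ e : E, co [e] e) {e : E} {A C : Formula E}
    (h : FSub co (Formula.wn e A) C) : ∃ e', co [e] e' ∧ C = Formula.wn e' A := by
  cases h with
  | refl => exact ⟨e, hsb2 e, rfl⟩
  | wn h => exact ⟨_, h, rfl⟩

theorem perm_forall₂ {r : Formula E → Formula E → Prop} :
    ∀ {Γ Δ : List (Formula E)}, Γ.Perm Δ → ∀ {Δ' : List (Formula E)}, List.Forall₂ r Δ Δ' →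
    ∃ Γ', List.Forall₂ r Γ Γ' ∧ Γ'.Perm Δ' := by
  intro Γ Δ h
  induction h with
  | nil => intro Δ' h'; cases h'; exact ⟨[], .nil, .nil⟩
  | cons x _ ih =>
    intro Δ' h'
    cases h' with
    | cons hx ht =>
      obtain ⟨Γ', h1, h2⟩ := ih ht
      exact ⟨_ :: Γ', .cons hx h1, .cons _ h2⟩
  | swap x y l =>
    intro Δ' h'
    cases h' with
    | cons hx ht =>
      cases ht with
      | cons hy hl =>
        exact ⟨_ :: _ :: _, .cons hy (.cons hx hl), .swap _ _ _⟩
  | trans _ _ ih1 ih2 =>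
    intro Δ' h'
    obtain ⟨M', hm1, hm2⟩ := ih2 h'
    obtain ⟨Γ', hg1, hg2⟩ := ih1 hm1
    exact ⟨Γ', hg1, hg2.trans hm2⟩

theorem forall₂_append_inv {r : Formula E → Formula E → Prop} :
    ∀ {l₁ l₂ l : List (Formula E)}, List.Forall₂ r (l₁ ++ l₂) l →
    ∃ l₁' l₂', l = l₁' ++ l₂' ∧ List.Forall₂ r l₁ l₁' ∧ List.Forall₂ r l₂ l₂' := by
  intro l₁
  induction l₁ with
  | nil => intro l₂ l h; exact ⟨[], l, rfl, .nil, h⟩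
  | cons a t ih =>
    intro l₂ l h
    cases h with
    | cons ha ht =>
      obtain ⟨l₁', l₂', rfl, h1, h2⟩ := ih ht
      exact ⟨_ :: l₁', l₂', rfl, .cons ha h1, h2⟩

theorem sub_map {l l' : List E} (A : Formula E)
    (h : List.Forall₂ (fun a b => co [a] b) l l') :
    List.Forall₂ (FSub co) (l.map (fun ei => Formula.wn ei A))
      (l'.map (fun ei => Formula.wn ei A)) := by
  induction h with
  | nil => exact .nil
  | cons h _ ih => exact .cons (.wn h) ih

theorem sub_map_wn_inv (hsb2 : ∀ e : E, co [e] e) {e : E} :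
    ∀ {Δ Δ' : List (Formula E)}, List.Forall₂ (FSub co) (Δ.map (Formula.wn e)) Δ' →
    ∃ es : List E, Δ' = List.zipWith Formula.wn es Δ ∧ es.length = Δ.length ∧
      ∀ ei ∈ es, co [e] ei := by
  intro Δ
  induction Δ with
  | nil => intro Δ' h; cases h; exact ⟨[], rfl, rfl, by simp⟩
  | cons D Δ ih =>
    intro Δ' h
    cases h with
    | cons hC ht =>
      obtain ⟨es, rfl, hlen, hco⟩ := ih ht
      obtain ⟨e', h', rfl⟩ := sub_wn_inv hsb2 hC
      refine ⟨e' :: es, rfl, by simp [hlen], ?_⟩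
      intro x hx
      rcases List.mem_cons.mp hx with rfl | hx
      · exact h'
      · exact hco _ hx

theorem ax_sub (hsb1 : ∀ e : E, p 1 e) {b : Bool} :
    ∀ (A C D : Formula E), FSub co A C → FSub co A.dual D →
    SuperLLO de co dg p b [C, D] := by
  intro A C D hC hD
  cases A with
  | wn e B =>
    cases hD
    cases hC with
    | refl => exact .ax b _
    | @wn _ e' _ h =>
      refine .ex (Γ := [Formula.oc e B.dual, Formula.wn e' B]) ?_ (List.Perm.swap _ _ _)
      have hp : SuperLLO de co dg p b (Formula.oc e B.dual ::
          List.zipWith Formula.wn [e'] [B]) := by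
        refine SuperLLO.promle (by simpa using h) rfl (hsb1 e) ?_
        have := SuperLLO.ax (de := de) (co := co) (dg := dg) (p := p) b B.dual
        simpa [Formula.dual_dual] using this
      simpa using hp
  | oc e B =>
    cases hC
    cases hD with
    | refl => exact .ax b _
    | @wn _ e' _ h =>
      have hp : SuperLLO de co dg p b (Formula.oc e B ::
          List.zipWith Formula.wn [e'] [B.dual]) := by
        refine SuperLLO.promle (by simpa using h) rfl (hsb1 e) ?_
        exact SuperLLO.ax b B
      simpa using hp
  | var n => cases hC; cases hD; exact .ax b _
  | covar n => cases hC; cases hD; exact .ax b _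
  | tens A B => cases hC; cases hD; exact .ax b _
  | parr A B => cases hC; cases hD; exact .ax b _
  | one => cases hC; cases hD; exact .ax b _
  | bot => cases hC; cases hD; exact .ax b _
  | awith A B => cases hC; cases hD; exact .ax b _
  | aplus A B => cases hC; cases hD; exact .ax b _
  | top => cases hC; cases hD; exact .ax b _
  | zero => cases hC; cases hD; exact .ax b _

theorem forall₂_append' {r : Formula E → Formula E → Prop} {l₁ l₂ m₁ m₂ : List (Formula E)}
    (h1 : List.Forall₂ r l₁ m₁) (h2 : List.Forall₂ r l₂ m₂) :
    List.Forall₂ r (l₁ ++ l₂) (m₁ ++ m₂) := by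
  induction h1 with
  | nil => exact h2
  | cons h _ ih => exact .cons h ih

end Aux
/-- Subsumption elimination: under the subsumption axioms, every sequent provable in
superLL is provable with the ordered promotion rule instead of functorial promotion and
the unary contraction (subsumption) rule; cut-freeness is preserved. -/
theorem superLL_subsumption_elimination {E : Type}
    (de : E → Prop) (co : List E → E → Prop) (dg : E → E → E → Prop) (p : ℕ → E → Prop)
    (sb1 : ∀ e : E, p 1 e)
    (sb2 : ∀ e : E, co [e] e)
    (sb3 : ∀ e1 e2 e3 : E, co [e1] e2 → co [e2] e3 → co [e1] e3)
    (sb4 : ∀ e1 e2 : E, de e1 → co [e1] e2 → de e2)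
    (sb5 : ∀ (l : List E) (e1 e2 : E), co l e1 → co [e1] e2 →
      ∃ l' : List E, List.Forall₂ (fun εi ε'i => co [εi] ε'i) l l' ∧ co l' e2)
    (sb6 : ∀ ε1 ε2 e1 e2 : E, dg ε1 ε2 e1 → co [e1] e2 →
      ∃ ε'1 : E, co [ε1] ε'1 ∧ dg ε'1 ε2 e2)
    :
    ∀ (b : Bool) (Γ : List (Formula E)),
      SuperLL de co dg p b Γ → SuperLLO de co dg p b Γ := by
  intro b Γ h
  suffices H : ∀ Γ', List.Forall₂ (FSub co) Γ Γ' → SuperLLO de co dg p b Γ' from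
    H Γ (sub_refl_list co Γ)
  induction h with
  | ax b A =>
    intro Γ' hΓ'
    cases hΓ' with
    | cons hC ht =>
      cases ht with
      | cons hD hnil =>
        cases hnil
        exact ax_sub sb1 A _ _ hC hD
  | ex _ hperm ih =>
    intro Γ' hΓ'
    obtain ⟨Γ₀, h1, h2⟩ := perm_forall₂ hperm hΓ'
    exact .ex (ih Γ₀ h1) h2
  | cut _ _ ih1 ih2 =>
    intro Γ' hΓ'
    obtain ⟨Γ₁, Γ₂, rfl, hg, hd⟩ := forall₂_append_inv hΓ'
    exact .cut (ih1 _ (.cons (.refl _) hg)) (ih2 _ (.cons (.refl _) hd))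
  | tens _ _ ih1 ih2 =>
    intro Γ' hΓ'
    cases hΓ' with
    | cons hC ht =>
      cases hC
      obtain ⟨Γ₁, Γ₂, rfl, hg, hd⟩ := forall₂_append_inv ht
      exact .tens (ih1 _ (.cons (.refl _) hg)) (ih2 _ (.cons (.refl _) hd))
  | parr _ ih =>
    intro Γ' hΓ'
    cases hΓ' with
    | cons hC ht =>
      cases hC
      exact .parr (ih _ (.cons (.refl _) (.cons (.refl _) ht)))
  | one b =>
    intro Γ' hΓ'
    cases hΓ' with
    | cons hC hnil => cases hC; cases hnil; exact .one b
  | bot _ ih =>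
    intro Γ' hΓ'
    cases hΓ' with
    | cons hC ht => cases hC; exact .bot (ih _ ht)
  | awith _ _ ih1 ih2 =>
    intro Γ' hΓ'
    cases hΓ' with
    | cons hC ht =>
      cases hC
      exact .awith (ih1 _ (.cons (.refl _) ht)) (ih2 _ (.cons (.refl _) ht))
  | aplus1 _ ih =>
    intro Γ' hΓ'
    cases hΓ' with
    | cons hC ht => cases hC; exact .aplus1 (ih _ (.cons (.refl _) ht))
  | aplus2 _ ih =>
    intro Γ' hΓ'
    cases hΓ' with
    | cons hC ht => cases hC; exact .aplus2 (ih _ (.cons (.refl _) ht))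
  | top b Γ =>
    intro Γ' hΓ'
    cases hΓ' with
    | cons hC ht => cases hC; exact .top b _
  | der hde _ ih =>
    intro Γ' hΓ'
    cases hΓ' with
    | cons hC ht =>
      obtain ⟨e', he', rfl⟩ := sub_wn_inv sb2 hC
      exact .der (sb4 _ _ hde he') (ih _ (.cons (.refl _) ht))
  | @con b l e A Γ hco _ ih =>
    intro Γ' hΓ'
    cases hΓ' with
    | cons hC ht =>
      obtain ⟨e', he', rfl⟩ := sub_wn_inv sb2 hC
      by_cases hl : l.length = 1
      · rcases l with _ | ⟨e1, _ | ⟨e2, t⟩⟩ <;> simp at hl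
        exact ih _ (.cons (.wn (sb3 _ _ _ hco he')) ht)
      · obtain ⟨l', hll', hl'e⟩ := sb5 l e e' hco he'
        have hlen := hll'.length_eq
        refine .con hl'e (by omega) (ih _ ?_)
        exact forall₂_append' (sub_map A hll') ht
  | dig hdg _ ih =>
    intro Γ' hΓ'
    cases hΓ' with
    | cons hC ht =>
      obtain ⟨e', he', rfl⟩ := sub_wn_inv sb2 hC
      obtain ⟨ε', h1, h2⟩ := sb6 _ _ _ _ hdg he'
      exact .dig h2 (ih _ (.cons (.wn h1) ht))
  | prom hp _ ih =>
    intro Γ' hΓ'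
    cases hΓ' with
    | cons hC ht =>
      cases hC
      obtain ⟨es, rfl, hlen, hco⟩ := sub_map_wn_inv sb2 ht
      exact .promle hco hlen hp (ih _ (sub_refl_list co _))
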